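/- Let g_j, g_0 be continuous Riemannian metrics on a compact m-manifold M such that g_j ≥ (1 − 1/j)·g_0 and ‖g_j‖_{L^{m/2}_{g_0}(M)} → ‖g_0‖_{L^{m/2}_{g_0}(M)}. Then for any measurable set U ⊂ M, Vol_{g_j}(U) → Vol_{g_0}(U). -/

import Mathlib

/-!
Let `f_j = √(det g_j)` be the density of `dV_{g_j}` against `μ = dV_{g₀}`. AM-GM on the
eigenvalues and Cauchy-Schwarz on the trace give `√(det g) ≤ (tr g / m)^{m/2} ≤ m^{-m/4} |g|^{m/2}`,
and `m^{m/4} = |g₀|^{m/2}`, so `limsup ∫ f_j ≤ μ(M)`. The lower bound `g_j ≥ (1 - 1/j) g₀` gives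
`f_j ≥ c_j := (1 - 1/j)^{m/2} → 1` everywhere. Hence `∫_U f_j ≥ c_j μ(U)`, while
`∫_U f_j ≤ ∫_M f_j - c_j μ(Uᶜ)`, and both bounds tend to `μ(U)`.
-/

open MeasureTheory Matrix Filter
open scoped ENNReal

/-- The pointwise norm `|A|_{g_0}` of a metric expressed in a `g₀`-orthonormal frame:
the Frobenius norm of its matrix of coefficients. -/
noncomputable def tensorNorm {m : ℕ} (A : Matrix (Fin m) (Fin m) ℝ) : ℝ :=
  Real.sqrt (∑ i, ∑ k, (A i k) ^ 2)

/-- The Riemannian volume of a measurable set `U` with respect to a metric `g`,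
expressed in a `g₀`-orthonormal frame with background measure `μ = dV_{g₀}`. -/
noncomputable def riemVol {M : Type*} [MeasurableSpace M] (μ : Measure M)
    {m : ℕ} (g : M → Matrix (Fin m) (Fin m) ℝ) (U : Set M) : ℝ≥0∞ :=
  ∫⁻ x in U, ENNReal.ofReal (Real.sqrt (g x).det) ∂μ

open Finset Topology

theorem Real.prod_le_sum_div_card_pow {ι : Type*} [Fintype ι] {z : ι → ℝ} (hz : ∀ i, 0 ≤ z i) :
    ∏ i, z i ≤ ((∑ i, z i) / Fintype.card ι) ^ Fintype.card ι := by
  rcases isEmpty_or_nonempty ι with hι | hι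
  · simp
  set n := Fintype.card ι
  have hn : (0 : ℝ) < n := Nat.cast_pos.2 Fintype.card_pos
  have amgm := Real.geom_mean_le_arith_mean_weighted univ (fun _ ↦ (n : ℝ)⁻¹) z
    (fun _ _ ↦ by positivity) (by simp [n, hn.ne']) (fun i _ ↦ hz i)
  rw [← Finset.mul_sum, ← div_eq_inv_mul] at amgm
  calc ∏ i, z i = (∏ i, z i ^ (n : ℝ)⁻¹) ^ n := by
        rw [← Finset.prod_pow]
        refine prod_congr rfl fun i _ ↦ ?_
        rw [← Real.rpow_natCast, ← Real.rpow_mul (hz i), inv_mul_cancel₀ hn.ne', Real.rpow_one]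
    _ ≤ _ := pow_le_pow_left₀ (prod_nonneg fun i _ ↦ Real.rpow_nonneg (hz i) _) amgm n

namespace Matrix

variable {n : Type*} [Fintype n]

theorem trace_le_sqrt_card_mul_sqrt_sum_sq (A : Matrix n n ℝ) :
    A.trace ≤ √(Fintype.card n) * √(∑ i, ∑ k, A i k ^ 2) :=
  calc A.trace = ∑ i, 1 * A i i := by simp [trace]
    _ ≤ √(∑ _i : n, (1 : ℝ) ^ 2) * √(∑ i, A i i ^ 2) := Real.sum_mul_le_sqrt_mul_sqrt _ _ _
    _ ≤ _ := by
      simp only [one_pow, sum_const, card_univ, nsmul_eq_mul, mul_one]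
      gcongr with i
      exact single_le_sum (fun k _ ↦ sq_nonneg (A i k)) (mem_univ i)

variable [DecidableEq n] {A : Matrix n n ℝ}

theorem PosSemidef.det_le_trace_div_card_pow (hA : A.PosSemidef) :
    A.det ≤ (A.trace / Fintype.card n) ^ Fintype.card n := by
  rw [hA.1.det_eq_prod_eigenvalues, hA.1.trace_eq_sum_eigenvalues]
  simpa using Real.prod_le_sum_div_card_pow hA.eigenvalues_nonneg

theorem IsHermitian.le_eigenvalues_of_le_dotProduct (hA : A.IsHermitian) {c : ℝ}
    (h : ∀ v, c * (v ⬝ᵥ v) ≤ v ⬝ᵥ A *ᵥ v) (i : n) : c ≤ hA.eigenvalues i := by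
  have hunit : ⇑(hA.eigenvectorBasis i) ⬝ᵥ ⇑(hA.eigenvectorBasis i) = 1 := by
    have := inner_self_eq_one_of_norm_eq_one (𝕜 := ℝ) (hA.eigenvectorBasis.orthonormal.1 i)
    rwa [EuclideanSpace.inner_eq_star_dotProduct, star_trivial] at this
  simpa [hA.eigenvalues_eq i, hunit] using h (hA.eigenvectorBasis i)

theorem IsHermitian.pow_card_le_det (hA : A.IsHermitian) {c : ℝ} (hc : 0 ≤ c)
    (h : ∀ v, c * (v ⬝ᵥ v) ≤ v ⬝ᵥ A *ᵥ v) : c ^ Fintype.card n ≤ A.det :=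
  calc c ^ Fintype.card n = ∏ _i : n, c := by simp
    _ ≤ ∏ i, hA.eigenvalues i :=
      prod_le_prod (fun _ _ ↦ hc) fun i _ ↦ hA.le_eigenvalues_of_le_dotProduct h i
    _ = A.det := by simp [hA.det_eq_prod_eigenvalues]

end Matrix

theorem tensorNorm_one (m : ℕ) : tensorNorm (1 : Matrix (Fin m) (Fin m) ℝ) = √m := by
  simp [tensorNorm, one_apply]

theorem Matrix.PosSemidef.det_mul_sqrt_pow_le_tensorNorm_pow {m : ℕ}
    {A : Matrix (Fin m) (Fin m) ℝ} (hA : A.PosSemidef) : A.det * √m ^ m ≤ tensorNorm A ^ m := by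
  have htrace : A.trace / m * √m ≤ tensorNorm A :=
    calc A.trace / m * √m ≤ √m * tensorNorm A / m * √m := by
          gcongr
          simpa [tensorNorm] using A.trace_le_sqrt_card_mul_sqrt_sum_sq
      _ = tensorNorm A * (√m * √m / m) := by ring
      _ = tensorNorm A * (m / m) := by rw [Real.mul_self_sqrt m.cast_nonneg]
      _ ≤ tensorNorm A := mul_le_of_le_one_right (Real.sqrt_nonneg _) (div_self_le_one _)
  calc A.det * √m ^ m ≤ (A.trace / m) ^ m * √m ^ m := by
        gcongr
        simpa using hA.det_le_trace_div_card_pow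
    _ = (A.trace / m * √m) ^ m := (mul_pow _ _ _).symm
    _ ≤ tensorNorm A ^ m := by
      gcongr
      exact mul_nonneg (div_nonneg hA.trace_nonneg m.cast_nonneg) (Real.sqrt_nonneg _)

theorem Matrix.PosSemidef.sqrt_det_mul_tensorNorm_one_rpow_le {m : ℕ}
    {A : Matrix (Fin m) (Fin m) ℝ} (hA : A.PosSemidef) :
    √A.det * tensorNorm (1 : Matrix (Fin m) (Fin m) ℝ) ^ ((m : ℝ) / 2) ≤
      tensorNorm A ^ ((m : ℝ) / 2) := by
  have rpow_half : ∀ t : ℝ, 0 ≤ t → t ^ ((m : ℝ) / 2) = √(t ^ m) := fun t ht ↦ by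
    rw [Real.sqrt_eq_rpow, ← Real.rpow_natCast, ← Real.rpow_mul ht]; ring_nf
  rw [tensorNorm_one, rpow_half _ (Real.sqrt_nonneg _),
    rpow_half (tensorNorm A) (Real.sqrt_nonneg _), ← Real.sqrt_mul hA.det_nonneg]
  exact Real.sqrt_le_sqrt hA.det_mul_sqrt_pow_le_tensorNorm_pow

theorem tensorNorm_one_rpow_pos {m : ℕ} (hm : 0 < m) :
    0 < tensorNorm (1 : Matrix (Fin m) (Fin m) ℝ) ^ ((m : ℝ) / 2) :=
  Real.rpow_pos_of_pos (by rw [tensorNorm_one]; positivity) _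

theorem lintegral_sqrt_det_le_lintegral_tensorNorm_rpow_div {M : Type*} [MeasurableSpace M]
    (μ : Measure M) {m : ℕ} (hm : 0 < m) {g : M → Matrix (Fin m) (Fin m) ℝ}
    (hg : ∀ x, (g x).PosSemidef) :
    ∫⁻ x, ENNReal.ofReal √(g x).det ∂μ ≤
      (∫⁻ x, ENNReal.ofReal (tensorNorm (g x) ^ ((m : ℝ) / 2)) ∂μ) /
        ENNReal.ofReal (tensorNorm (1 : Matrix (Fin m) (Fin m) ℝ) ^ ((m : ℝ) / 2)) := by
  rw [ENNReal.le_div_iff_mul_le (Or.inl (ENNReal.ofReal_pos.2 (tensorNorm_one_rpow_pos hm)).ne')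
      (Or.inl ENNReal.ofReal_ne_top), ← lintegral_mul_const' _ _ ENNReal.ofReal_ne_top]
  refine lintegral_mono fun x ↦ ?_
  rw [← ENNReal.ofReal_mul (Real.sqrt_nonneg _)]
  exact ENNReal.ofReal_le_ofReal (hg x).sqrt_det_mul_tensorNorm_one_rpow_le

namespace MeasureTheory

variable {α ι : Type*} [MeasurableSpace α] {μ : Measure α}

theorem const_mul_measure_le_setLIntegral {f : α → ℝ≥0∞} {c : ℝ≥0∞} (hcf : ∀ x, c ≤ f x)
    (s : Set α) : c * μ s ≤ ∫⁻ x in s, f x ∂μ :=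
  (setLIntegral_const s c).symm.trans_le (lintegral_mono hcf)

theorem tendsto_setLIntegral_of_const_le_of_lintegral_le [IsFiniteMeasure μ] {l : Filter ι}
    {f : ι → α → ℝ≥0∞} {c b : ι → ℝ≥0∞} (hc : Tendsto c l (𝓝 1)) (hcf : ∀ j x, c j ≤ f j x)
    (hb : Tendsto b l (𝓝 (μ Set.univ))) (hfb : ∀ j, ∫⁻ x, f j x ∂μ ≤ b j)
    {U : Set α} (hU : MeasurableSet U) :
    Tendsto (fun j ↦ ∫⁻ x in U, f j x ∂μ) l (𝓝 (μ U)) := by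
  have hlower : Tendsto (fun j ↦ c j * μ U) l (𝓝 (μ U)) := by
    simpa using ENNReal.Tendsto.mul_const hc (Or.inl one_ne_zero)
  have hupper : Tendsto (fun j ↦ b j - c j * μ Uᶜ) l (𝓝 (μ U)) := by
    have := ENNReal.Tendsto.sub hb
      (ENNReal.Tendsto.mul_const (b := μ Uᶜ) hc (Or.inl one_ne_zero))
      (Or.inl (measure_ne_top μ _))
    rwa [one_mul, ← measure_compl hU.compl (measure_ne_top μ _), compl_compl] at this
  refine tendsto_of_tendsto_of_tendsto_of_le_of_le' hlower hupper
    (Eventually.of_forall fun j ↦ const_mul_measure_le_setLIntegral (hcf j) U) ?_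
  -- `ENNReal` subtraction undoes the addition of `c j * μ Uᶜ` only when this term is finite.
  filter_upwards [hc.eventually_ne ENNReal.one_ne_top] with j hcj
  refine ENNReal.le_sub_of_add_le_right (ENNReal.mul_ne_top hcj (measure_ne_top μ _)) ?_
  calc ∫⁻ x in U, f j x ∂μ + c j * μ Uᶜ
      ≤ ∫⁻ x in U, f j x ∂μ + ∫⁻ x in Uᶜ, f j x ∂μ := by
        gcongr; exact const_mul_measure_le_setLIntegral (hcf j) Uᶜ
    _ = ∫⁻ x, f j x ∂μ := lintegral_add_compl _ hU
    _ ≤ b j := hfb j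

end MeasureTheory

theorem vol_convergence_of_lhalfm_norm_convergence_general
    {M : Type*} [MeasurableSpace M]
    (μ : Measure M) [IsFiniteMeasure μ]
    {m : ℕ} (hm : 0 < m) (g : ℕ → M → Matrix (Fin m) (Fin m) ℝ)
    (g0 : M → Matrix (Fin m) (Fin m) ℝ) (hg0 : ∀ x, g0 x = 1)
    (hpos : ∀ j x, (g j x).PosSemidef)
    (hlow : ∀ (j : ℕ) (x : M) (v : Fin m → ℝ),
      (1 - 1 / (j : ℝ)) * (v ⬝ᵥ (g0 x).mulVec v) ≤ v ⬝ᵥ (g j x).mulVec v)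
    (hnorm : Tendsto
      (fun j => ∫⁻ x, ENNReal.ofReal (tensorNorm (g j x) ^ ((m : ℝ) / 2)) ∂μ) atTop
      (nhds (∫⁻ x, ENNReal.ofReal (tensorNorm (g0 x) ^ ((m : ℝ) / 2)) ∂μ))) :
    ∀ U : Set M, MeasurableSet U →
      Tendsto (fun j => riemVol μ (g j) U) atTop (nhds (riemVol μ g0 U)) := by
  intro U hU
  have hK := ENNReal.ofReal_pos.2 (tensorNorm_one_rpow_pos hm)
  have hc : Tendsto (fun j : ℕ ↦ ENNReal.ofReal (√((1 - 1 / (j : ℝ)) ^ m))) atTop (𝓝 1) := by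
    have := (((tendsto_const_nhds (x := (1 : ℝ))).sub
      tendsto_one_div_atTop_nhds_zero_nat).pow m).sqrt
    simpa using ENNReal.tendsto_ofReal this
  have hlower : ∀ (j : ℕ) x, (1 - 1 / (j : ℝ)) ^ m ≤ (g j x).det := fun j x ↦ by
    simpa using (hpos j x).1.pow_card_le_det (by simpa using Nat.cast_inv_le_one j)
      fun v ↦ by simpa [hg0] using hlow j x v
  have hlimit : (∫⁻ x, ENNReal.ofReal (tensorNorm (g0 x) ^ ((m : ℝ) / 2)) ∂μ) /
      ENNReal.ofReal (tensorNorm (1 : Matrix (Fin m) (Fin m) ℝ) ^ ((m : ℝ) / 2)) = μ Set.univ := by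
    simp only [hg0, lintegral_const]
    rw [mul_comm]
    exact ENNReal.mul_div_cancel_right hK.ne' ENNReal.ofReal_ne_top
  rw [show riemVol μ g0 U = μ U by simp [riemVol, hg0]]
  exact tendsto_setLIntegral_of_const_le_of_lintegral_le hc
    (fun j x ↦ ENNReal.ofReal_le_ofReal (Real.sqrt_le_sqrt (hlower j x)))
    (hlimit ▸ ENNReal.Tendsto.div_const hnorm (Or.inr hK.ne'))
    (fun j ↦ lintegral_sqrt_det_le_lintegral_tensorNorm_rpow_div μ hm (hpos j)) hU

/-- Let `g_j, g_0` be continuous Riemannian metrics on a compact `m`-manifold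
(expressed in a `g₀`-orthonormal frame, so `g₀ = 1` and `μ = dV_{g₀}`) with
`g_j ≥ (1 − 1/j) g_0` and `‖g_j‖_{L^{m/2}_{g_0}} → ‖g_0‖_{L^{m/2}_{g_0}}`.
Then for any measurable set `U`, `Vol_{g_j}(U) → Vol_{g_0}(U)`. -/
theorem vol_convergence_of_lhalfm_norm_convergence
    {M : Type*} [TopologicalSpace M] [CompactSpace M]
    [MeasurableSpace M] [OpensMeasurableSpace M]
    (μ : Measure M) [IsFiniteMeasure μ]
    {m : ℕ} (hm : 0 < m) (g : ℕ → M → Matrix (Fin m) (Fin m) ℝ)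
    (g0 : M → Matrix (Fin m) (Fin m) ℝ) (hg0 : ∀ x, g0 x = 1)
    (hcont : ∀ j, Continuous (g j))
    (hpos : ∀ j x, (g j x).PosSemidef)
    (hlow : ∀ (j : ℕ) (x : M) (v : Fin m → ℝ),
      (1 - 1 / (j : ℝ)) * (v ⬝ᵥ (g0 x).mulVec v) ≤ v ⬝ᵥ (g j x).mulVec v)
    (hnorm : Tendsto
      (fun j => ∫⁻ x, ENNReal.ofReal (tensorNorm (g j x) ^ ((m : ℝ) / 2)) ∂μ) atTop
      (nhds (∫⁻ x, ENNReal.ofReal (tensorNorm (g0 x) ^ ((m : ℝ) / 2)) ∂μ))) :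
    ∀ U : Set M, MeasurableSet U →
      Tendsto (fun j => riemVol μ (g j) U) atTop (nhds (riemVol μ g0 U)) :=
  vol_convergence_of_lhalfm_norm_convergence_general μ hm g g0 hg0 hpos hlow hnorm
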